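/- arXiv:1912.05482 — 2 statements merged into one kernel-verified Lean document; each statement's English description precedes it below -/
import Mathlib

section
/- For Re(α) > 0, Re(λ) > -1, and β ∈ ℂ, the tempered fractional integral of f(t) = (t-a)^λ is T_a I^(α,β) [(u-a)^λ](t) = (t-a)^{λ+α} · (Γ(λ+1)/Γ(λ+α+1)) · ₁F₁(α; λ+α+1; -β(t-a)) for t > a, where ₁F₁ is the confluent hypergeometric function. -/
/-! Expand `exp (-β (t - u))` in its power series. The series may be integrated termwise, being
dominated by `exp (‖β‖ (t - a))` times the integrable kernel `(t - u)^(α-1) (u - a)^λ`, and the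
`m`-th term is then a Beta integral:
`∫ₐᵗ (t - u)^(α+m-1) (u - a)^λ du = (t - a)^(α+m+λ) Γ(α+m) Γ(λ+1) / Γ(α+m+λ+1)`,
which is, up to the prefactor, the `m`-th term of `₁F₁(α; λ+α+1; -β(t-a))`. -/

open MeasureTheory intervalIntegral

/-- Tempered fractional integral (complex-valued). -/
noncomputable def temperedIntegral (a : ℝ) (α β : ℂ) (f : ℝ → ℂ) (t : ℝ) : ℂ :=
  (1 / Complex.Gamma α) * ∫ u in a..t, (↑(t - u) : ℂ) ^ (α - 1) *
    Complex.exp (-β * ↑(t - u)) * f u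

/-- Confluent hypergeometric function `₁F₁(a; b; z)` as a series. -/
noncomputable def hyp1F1 (a b z : ℂ) : ℂ :=
  ∑' m : ℕ, (Complex.Gamma (a + m) * Complex.Gamma b /
      (Complex.Gamma a * Complex.Gamma (b + m))) * z ^ m / (m.factorial : ℂ)

open Set

theorem hasSum_integral_mul_cexp {X : Type*} [MeasurableSpace X] {μ : Measure X} {g x : X → ℂ}
    {R : ℝ} (hg : Integrable g μ) (hx : AEStronglyMeasurable x μ) (hxR : ∀ᵐ u ∂μ, ‖x u‖ ≤ R) :
    HasSum (fun n : ℕ => ∫ u, g u * x u ^ n / n.factorial ∂μ)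
      (∫ u, g u * Complex.exp (x u) ∂μ) := by
  have hbound : ∀ u, HasSum (fun n : ℕ => ‖g u‖ * (R ^ n / n.factorial)) (‖g u‖ * Real.exp R) :=
    fun u => by
      rw [Real.exp_eq_exp_ℝ]
      exact (NormedSpace.expSeries_div_hasSum_exp R).mul_left _
  refine MeasureTheory.hasSum_integral_of_dominated_convergence
    (fun n u => ‖g u‖ * (R ^ n / n.factorial)) (fun n => by fun_prop) (fun n => ?_)
    (ae_of_all _ fun u => (hbound u).summable) ?_ (ae_of_all _ fun u => ?_)
  · filter_upwards [hxR] with u hu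
    rw [norm_div, norm_mul, norm_pow, Complex.norm_natCast, mul_div_assoc]
    gcongr
  · simp_rw [fun u => (hbound u).tsum_eq]
    exact hg.norm.mul_const _
  · simp_rw [mul_div_assoc, Complex.exp_eq_exp_ℂ]
    exact (NormedSpace.expSeries_div_hasSum_exp (x u)).mul_left _

theorem continuousOn_ofReal_cpow {f : ℝ → ℝ} {s : Set ℝ} (hf : Continuous f)
    (hpos : ∀ u ∈ s, 0 < f u) (p : ℂ) : ContinuousOn (fun u => (f u : ℂ) ^ p) s :=
  (Complex.continuous_ofReal.comp hf).continuousOn.cpow continuousOn_const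
    fun u hu => Complex.ofReal_mem_slitPlane.2 (hpos u hu)

section BetaKernel

variable {a t : ℝ} {p q : ℂ}

theorem intervalIntegrable_sub_cpow_mul_sub_cpow (ht : a < t) (hp : 0 < p.re) (hq : 0 < q.re) :
    IntervalIntegrable (fun u : ℝ => (↑(t - u) : ℂ) ^ (p - 1) * (↑(u - a) : ℂ) ^ (q - 1))
      volume a t := by
  obtain ⟨c, hac, hct⟩ := exists_between ht
  have hleft : IntervalIntegrable (fun u : ℝ => (↑(u - a) : ℂ) ^ (q - 1)) volume a c := by
    simpa using (intervalIntegral.intervalIntegrable_cpow' (a := 0) (b := c - a)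
      (by simpa using hq)).comp_sub_right a
  have hright : IntervalIntegrable (fun u : ℝ => (↑(t - u) : ℂ) ^ (p - 1)) volume c t := by
    simpa using ((intervalIntegral.intervalIntegrable_cpow' (a := 0) (b := t - c)
      (by simpa using hp)).comp_sub_left t).symm
  refine (hleft.continuousOn_mul ?_).trans (hright.mul_continuousOn ?_)
  · refine continuousOn_ofReal_cpow (by fun_prop) (fun u hu => ?_) _
    rw [uIcc_of_le (by linarith)] at hu
    linarith [hu.2]
  · refine continuousOn_ofReal_cpow (by fun_prop) (fun u hu => ?_) _
    rw [uIcc_of_le (by linarith)] at hu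
    linarith [hu.1]

theorem integral_sub_cpow_mul_sub_cpow (ht : a < t) (hp : 0 < p.re) (hq : 0 < q.re) :
    ∫ u in a..t, (↑(t - u) : ℂ) ^ (p - 1) * (↑(u - a) : ℂ) ^ (q - 1) =
      (↑(t - a) : ℂ) ^ (p + q - 1) *
        (Complex.Gamma p * Complex.Gamma q / Complex.Gamma (p + q)) := by
  have hshift := intervalIntegral.integral_comp_add_right (a := 0) (b := t - a)
    (fun u : ℝ => (↑(t - u) : ℂ) ^ (p - 1) * (↑(u - a) : ℂ) ^ (q - 1)) a
  rw [zero_add, sub_add_cancel] at hshift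
  have hintegrand : ∀ x : ℝ, (↑(t - (x + a)) : ℂ) ^ (p - 1) * (↑(x + a - a) : ℂ) ^ (q - 1)
      = (↑x : ℂ) ^ (q - 1) * ((↑(t - a) : ℂ) - ↑x) ^ (p - 1) := fun x => by
    rw [show t - (x + a) = (t - a) - x by ring, add_sub_cancel_right, Complex.ofReal_sub, mul_comm]
  have hGamma : Complex.Gamma p * Complex.Gamma q / Complex.Gamma (p + q) =
      Complex.betaIntegral p q := by
    rw [div_eq_iff (Complex.Gamma_ne_zero_of_re_pos (by simp only [Complex.add_re]; linarith)),
      Complex.Gamma_mul_Gamma_eq_betaIntegral hp hq, mul_comm]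
  rw [← hshift, hGamma]
  simp_rw [hintegrand]
  rw [Complex.betaIntegral_scaled q p (by linarith), Complex.betaIntegral_symm, add_comm q p]

end BetaKernel

theorem integral_sub_cpow_mul_sub_cpow_mul_pow {a t : ℝ} (ht : a < t) {α lam : ℂ}
    (hα : 0 < α.re) (hlam : -1 < lam.re) (β : ℂ) (m : ℕ) :
    ∫ u in a..t, (↑(t - u) : ℂ) ^ (α - 1) * (↑(u - a) : ℂ) ^ lam * (-β * ↑(t - u)) ^ m /
        m.factorial =
      (-β) ^ m / m.factorial * ((↑(t - a) : ℂ) ^ (α + m + lam) *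
        (Complex.Gamma (α + m) * Complex.Gamma (lam + 1) / Complex.Gamma (α + m + (lam + 1)))) := by
  have hαm : 0 < (α + m).re := by simp only [Complex.add_re, Complex.natCast_re]; positivity
  have hlam1 : 0 < (lam + 1).re := by simp only [Complex.add_re, Complex.one_re]; linarith
  have hbeta := integral_sub_cpow_mul_sub_cpow ht hαm hlam1
  rw [add_sub_cancel_right, show α + m + (lam + 1) - 1 = α + m + lam by ring] at hbeta
  rw [← hbeta, ← intervalIntegral.integral_const_mul]
  -- `cpow_add` needs a nonzero base, so the integrands are only compared away from `u = t`
  refine intervalIntegral.integral_congr_ae ?_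
  filter_upwards [Measure.ae_ne volume t] with u hut _
  have hne : (↑(t - u) : ℂ) ≠ 0 := Complex.ofReal_ne_zero.2 (sub_ne_zero.2 hut.symm)
  rw [add_sub_right_comm, Complex.cpow_add _ _ hne, Complex.cpow_natCast]
  ring

theorem tempered_integral_power (a : ℝ) (α β lam : ℂ) (hα : 0 < α.re) (hlam : -1 < lam.re)
    (t : ℝ) (ht : a < t) :
    temperedIntegral a α β (fun u => (↑(u - a) : ℂ) ^ lam) t =
      (↑(t - a) : ℂ) ^ (lam + α) * (Complex.Gamma (lam + 1) / Complex.Gamma (lam + α + 1)) *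
        hyp1F1 α (lam + α + 1) (-β * ↑(t - a)) := by
  have hkernel : IntegrableOn (fun u : ℝ => (↑(t - u) : ℂ) ^ (α - 1) * (↑(u - a) : ℂ) ^ lam)
      (Ioc a t) := by
    simpa using (intervalIntegrable_sub_cpow_mul_sub_cpow ht hα (q := lam + 1)
      (by simp only [Complex.add_re, Complex.one_re]; linarith)).1
  have hbound : ∀ᵐ u ∂volume.restrict (Ioc a t), ‖-β * ↑(t - u)‖ ≤ ‖β‖ * (t - a) := by
    refine ae_restrict_of_forall_mem measurableSet_Ioc fun u hu => ?_
    rw [norm_mul, norm_neg, Complex.norm_real, Real.norm_of_nonneg (by linarith [hu.2])]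
    gcongr
    linarith [hu.1]
  have hseries := hasSum_integral_mul_cexp hkernel (by fun_prop) hbound
  simp only [← intervalIntegral.integral_of_le ht.le,
    integral_sub_cpow_mul_sub_cpow_mul_pow ht hα hlam] at hseries
  rw [temperedIntegral, hyp1F1, ← tsum_mul_left]
  simp only [mul_right_comm _ (Complex.exp _)]
  rw [← (hseries.mul_left _).tsum_eq]
  refine tsum_congr fun m => ?_
  have hta : (↑(t - a) : ℂ) ≠ 0 := Complex.ofReal_ne_zero.2 (sub_ne_zero.2 ht.ne')
  have hG : Complex.Gamma (lam + α + 1) ≠ 0 :=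
    Complex.Gamma_ne_zero_of_re_pos (by simp only [Complex.add_re, Complex.one_re]; linarith)
  rw [show α + m + (lam + 1) = lam + α + 1 + m by ring, show α + m + lam = (lam + α) + m by ring,
    Complex.cpow_add _ _ hta, Complex.cpow_natCast]
  field_simp
  ring
end

section
/- For Re(α) > 0, Re(ν) > 0, and β ∈ ℂ, the tempered fractional integral of the function e^{-βt}(t-a)^{ν-1} is T_a I^(α,β) [e^{-βu}(u-a)^{ν-1}](t) = (Γ(ν)/Γ(ν+α)) e^{-βt} (t-a)^{α+ν-1} for t > a. -/
open MeasureTheory intervalIntegral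

/-! The weight `e^{-βu}` cancels the tempering kernel `e^{-β(t-u)}` up to the constant
`e^{-βt}`, which reduces the claim to the Riemann–Liouville integral (`β = 0`) of `(u - a)^(ν-1)`;
the substitution `u = a + x` turns that into a scaled Beta integral. -/

theorem temperedIntegral_exp_mul (a : ℝ) (α β : ℂ) (f : ℝ → ℂ) (t : ℝ) :
    temperedIntegral a α β (fun u => Complex.exp (-β * u) * f u) t =
      Complex.exp (-β * t) * temperedIntegral a α 0 f t := by
  have kernel_mul_weight : ∀ u : ℝ, Complex.exp (-β * ↑(t - u)) * Complex.exp (-β * u) =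
      Complex.exp (-β * t) := fun u => by
    rw [← Complex.exp_add]; push_cast; ring_nf
  unfold temperedIntegral
  simp only [neg_zero, zero_mul, Complex.exp_zero, mul_one]
  rw [mul_left_comm, ← intervalIntegral.integral_const_mul (Complex.exp (-β * t))]
  congr 1
  refine intervalIntegral.integral_congr fun u _ => ?_
  linear_combination (↑(t - u) : ℂ) ^ (α - 1) * f u * kernel_mul_weight u

theorem integral_sub_cpow_mul_sub_cpow_s5 {a t : ℝ} (ht : a < t) (α ν : ℂ) :
    ∫ u in a..t, (↑(t - u) : ℂ) ^ (α - 1) * (↑(u - a) : ℂ) ^ (ν - 1) =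
      (↑(t - a) : ℂ) ^ (ν + α - 1) * Complex.betaIntegral ν α := by
  rw [← Complex.betaIntegral_scaled ν α (sub_pos.mpr ht), ← sub_self a,
    ← intervalIntegral.integral_comp_sub_right]
  refine intervalIntegral.integral_congr fun u _ => ?_
  push_cast
  ring_nf

theorem temperedIntegral_zero_sub_cpow {a t : ℝ} (ht : a < t) {α ν : ℂ} (hα : 0 < α.re)
    (hν : 0 < ν.re) :
    temperedIntegral a α 0 (fun u => (↑(u - a) : ℂ) ^ (ν - 1)) t =
      Complex.Gamma ν / Complex.Gamma (ν + α) * (↑(t - a) : ℂ) ^ (α + ν - 1) := by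
  unfold temperedIntegral
  simp only [neg_zero, zero_mul, Complex.exp_zero, mul_one]
  rw [integral_sub_cpow_mul_sub_cpow_s5 ht, Complex.betaIntegral_eq_Gamma_mul_div ν α hν hα,
    add_comm ν α]
  field_simp [Complex.Gamma_ne_zero_of_re_pos hα]

theorem tempered_integral_exp_power (a : ℝ) (α β ν : ℂ) (hα : 0 < α.re) (hν : 0 < ν.re)
    (t : ℝ) (ht : a < t) :
    temperedIntegral a α β (fun u => Complex.exp (-β * u) * (↑(u - a) : ℂ) ^ (ν - 1)) t =
      (Complex.Gamma ν / Complex.Gamma (ν + α)) * Complex.exp (-β * t) *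
        (↑(t - a) : ℂ) ^ (α + ν - 1) := by
  rw [temperedIntegral_exp_mul, temperedIntegral_zero_sub_cpow ht hα hν]
  ring
end
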